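/- arXiv:1101.0064 — 7 statements merged into one kernel-verified Lean document; each statement's English description precedes it below -/
import Mathlib

section
/- Let I be a finite index set and let {C_r | r ∈ I} be a family of linear subspaces (codes) of F_2^n, each of dimension at least t, such that for every nonzero x ∈ F_2^n, the probability (over uniform r ∈ I) that x ∈ C_r is at most 2^(t-n)·ε. Then for every nonzero x ∈ F_2^n, the probability that x lies in the dual code C_r^⊥ is at most (1 - 2^(t-n)·ε)·2^(1-t) + ε - 1. -/
open scoped Classical

/-- Probability of an event under the uniform distribution on a finite index set. -/
noncomputable def pr {I : Type*} [Fintype I] (P : I → Prop) : ℝ :=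
  ((Finset.univ.filter P).card : ℝ) / (Fintype.card I : ℝ)

/-- The dual code of a set of vectors in `F_2^n`, with respect to the standard
bilinear form `x·y = ∑ i, x i * y i`. -/
def dualSet {n : ℕ} (C : Set (Fin n → ZMod 2)) : Set (Fin n → ZMod 2) :=
  {y | ∀ x ∈ C, (∑ i, x i * y i) = 0}

lemma card_submodule {M : Type*} [AddCommGroup M] [Module (ZMod 2) M] [Fintype M]
    (p : Submodule (ZMod 2) M) :
    Fintype.card p = 2 ^ Module.finrank (ZMod 2) p := by
  rw [Module.card_eq_pow_finrank (K := ZMod 2), ZMod.card]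

set_option maxHeartbeats 1000000 in
/-- If `{C_r}` is a family of codes in `F_2^n`, each of dimension at least `t`,
that is `ε`-almost universal₂ (i.e. `Pr_r[x ∈ C_r] ≤ 2^(t-n)·ε` for all nonzero `x`), then
for every nonzero `x`, `Pr_r[x ∈ C_r^⊥] ≤ (1 - 2^(t-n)·ε)·2^(1-t) + ε - 1`. -/
theorem stmt0 {n t : ℕ} {I : Type*} [Fintype I] [Nonempty I]
    (C : I → Submodule (ZMod 2) (Fin n → ZMod 2)) (ε : ℝ)
    (hdim : ∀ r, t ≤ Module.finrank (ZMod 2) (C r))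
    (huniv : ∀ x : Fin n → ZMod 2, x ≠ 0 →
      pr (fun r => x ∈ C r) ≤ (2 : ℝ) ^ t / 2 ^ n * ε) :
    ∀ x : Fin n → ZMod 2, x ≠ 0 →
      pr (fun r => x ∈ dualSet (C r : Set (Fin n → ZMod 2))) ≤
        (1 - (2 : ℝ) ^ t / 2 ^ n * ε) * (2 / 2 ^ t) + ε - 1 := by
  intro x hx
  obtain ⟨i0, hi0⟩ : ∃ i, x i ≠ 0 := by
    by_contra h; push_neg at h; exact hx (funext fun i => h i)
  have hzmod : ∀ a : ZMod 2, a ≠ 0 → a = 1 := by decide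
  let φ : (Fin n → ZMod 2) →ₗ[ZMod 2] ZMod 2 :=
    { toFun := fun y => ∑ i, y i * x i
      map_add' := fun a b => by simp [add_mul, Finset.sum_add_distrib]
      map_smul' := fun c a => by simp [Finset.mul_sum, mul_assoc] }
  have hφ_apply : ∀ y : Fin n → ZMod 2, φ y = ∑ i, y i * x i := fun _ => rfl
  -- φ is surjective
  have hsurj : Function.Surjective φ := by
    intro c
    refine ⟨c • Pi.single i0 1, ?_⟩
    rw [hφ_apply]
    simp [Pi.single_apply, ite_mul, Finset.sum_ite_eq', hzmod _ hi0]
  -- rank-nullity for φ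
  have hkerrank : Module.finrank (ZMod 2) (LinearMap.ker φ) + 1 = n := by
    have h1 := LinearMap.finrank_range_add_finrank_ker φ
    rw [LinearMap.range_eq_top.mpr hsurj, finrank_top, Module.finrank_self,
      Module.finrank_fintype_fun_eq_card, Fintype.card_fin] at h1
    omega
  -- cardinality of the hyperplane
  have hHcard : 2 * (Fintype.card (LinearMap.ker φ)) = 2 ^ n := by
    rw [card_submodule, ← pow_succ']
    rw [hkerrank]
  -- membership in the dual is containment in ker φ
  have hdual : ∀ r, x ∈ dualSet (C r : Set (Fin n → ZMod 2)) ↔ ∀ y ∈ C r, φ y = 0 := by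
    intro r
    simp only [dualSet, Set.mem_setOf_eq, hφ_apply, SetLike.mem_coe]
  -- for each r, the finset of nonzero elements of C r ∩ ker φ
  set E : Finset (Fin n → ZMod 2) :=
    Finset.univ.filter (fun y => φ y = 0 ∧ y ≠ 0) with hE
  have hEcard : (E.card : ℝ) = (Fintype.card (LinearMap.ker φ) : ℝ) - 1 := by
    have h0 : E = (Finset.univ.filter (fun y => φ y = 0)).erase 0 := by
      ext y
      simp [hE, and_comm, eq_comm]
    have h1 : (Finset.univ.filter (fun y : Fin n → ZMod 2 => φ y = 0)).card
        = Fintype.card (LinearMap.ker φ) := by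
      rw [Fintype.card_subtype]
      congr 1
      ext y
      simp [LinearMap.mem_ker]
    have h2 : (0 : Fin n → ZMod 2) ∈ Finset.univ.filter (fun y : Fin n → ZMod 2 => φ y = 0) := by
      simp
    rw [h0, Finset.card_erase_of_mem h2, h1]
    have : 1 ≤ Fintype.card (LinearMap.ker φ) := Fintype.card_pos
    push_cast [Nat.cast_sub this]
    ring
  -- the set F r
  set F : I → Finset (Fin n → ZMod 2) :=
    fun r => Finset.univ.filter (fun y => y ∈ C r ∧ φ y = 0) with hF
  have hQF : ∀ r, E.filter (fun y => y ∈ C r) = (F r).erase 0 := by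
    intro r
    ext y
    simp only [hE, hF, Finset.mem_filter, Finset.mem_erase, Finset.mem_univ, true_and]
    tauto
  have h0F : ∀ r, (0 : Fin n → ZMod 2) ∈ F r := by
    intro r; simp [hF]
  have hFpos : ∀ r, 1 ≤ (F r).card := fun r => Finset.card_pos.mpr ⟨0, h0F r⟩
  have hQcard : ∀ r, ((E.filter (fun y => y ∈ C r)).card : ℝ) = ((F r).card : ℝ) - 1 := by
    intro r
    rw [hQF r, Finset.card_erase_of_mem (h0F r)]
    push_cast [Nat.cast_sub (hFpos r)]
    ring
  -- F r card equals card of kernel of restricted map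
  have hFker : ∀ r, (F r).card = Fintype.card (LinearMap.ker (φ.domRestrict (C r))) := by
    intro r
    have e : {y : Fin n → ZMod 2 // y ∈ C r ∧ φ y = 0} ≃ LinearMap.ker (φ.domRestrict (C r)) :=
      { toFun := fun b => ⟨⟨b.1, b.2.1⟩, by
          simp only [LinearMap.mem_ker, LinearMap.domRestrict_apply]
          exact b.2.2⟩
        invFun := fun a => ⟨a.1.1, a.1.2, by
          have := a.2
          simpa only [LinearMap.mem_ker, LinearMap.domRestrict_apply] using this⟩
        left_inv := fun b => rfl
        right_inv := fun a => rfl }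
    rw [hF, ← Fintype.card_subtype, Fintype.card_congr e]
  -- lower bound on card of F r
  have hFlow : ∀ r, (2:ℝ) ^ t ≤ 2 * ((F r).card : ℝ) := by
    intro r
    rw [hFker r]
    have h1 := LinearMap.finrank_range_add_finrank_ker (φ.domRestrict (C r))
    have h2 : Module.finrank (ZMod 2) (LinearMap.range (φ.domRestrict (C r))) ≤ 1 := by
      calc Module.finrank (ZMod 2) (LinearMap.range (φ.domRestrict (C r)))
          ≤ Module.finrank (ZMod 2) (ZMod 2) := Submodule.finrank_le _
        _ = 1 := Module.finrank_self _
    have h3 : Module.finrank (ZMod 2) (C r) ≤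
        Module.finrank (ZMod 2) (LinearMap.ker (φ.domRestrict (C r))) + 1 := by omega
    have h4 : (t : ℕ) ≤ Module.finrank (ZMod 2) (LinearMap.ker (φ.domRestrict (C r))) + 1 :=
      le_trans (hdim r) h3
    rw [card_submodule]
    calc (2:ℝ) ^ t ≤ 2 ^ (Module.finrank (ZMod 2) (LinearMap.ker (φ.domRestrict (C r))) + 1) := by
          apply pow_le_pow_right₀ (by norm_num) h4
      _ = 2 * ((2:ℕ) ^ Module.finrank (ZMod 2) (LinearMap.ker (φ.domRestrict (C r))) : ℕ) := by
          push_cast; ring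
  -- better bound when x is in the dual code
  have hFdual : ∀ r, x ∈ dualSet (C r : Set (Fin n → ZMod 2)) → (2:ℝ) ^ t ≤ ((F r).card : ℝ) := by
    intro r hr
    have hall := (hdual r).mp hr
    have hFeq : F r = Finset.univ.filter (fun y => y ∈ C r) := by
      ext y
      simp only [hF, Finset.mem_filter, Finset.mem_univ, true_and, and_iff_left_iff_imp]
      exact hall y
    have hcard : (F r).card = Fintype.card (C r) := by
      rw [hFeq, Fintype.card_subtype]
    rw [hcard, card_submodule]
    push_cast
    apply pow_le_pow_right₀ (by norm_num) (hdim r)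
  -- double counting
  set N : ℕ := ∑ r : I, (E.filter (fun y => y ∈ C r)).card with hN
  have hswap : N = ∑ y ∈ E, (Finset.univ.filter (fun r => y ∈ C r)).card := by
    rw [hN]
    simp only [Finset.card_filter]
    exact Finset.sum_comm
  -- upper bound
  set k : ℝ := (Fintype.card I : ℝ) with hk
  have hkpos : 0 < k := by
    rw [hk]; exact_mod_cast Fintype.card_pos
  have hupper : (N : ℝ) ≤ ((2:ℝ)^n / 2 - 1) * (k * ((2:ℝ) ^ t / 2 ^ n * ε)) := by
    rw [hswap]
    push_cast
    calc ∑ y ∈ E, ((Finset.univ.filter (fun r => y ∈ C r)).card : ℝ)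
        ≤ ∑ _y ∈ E, (k * ((2:ℝ) ^ t / 2 ^ n * ε)) := by
          apply Finset.sum_le_sum
          intro y hy
          have hy' : y ≠ 0 := by
            simp only [hE, Finset.mem_filter] at hy
            exact hy.2.2
          have := huniv y hy'
          unfold pr at this
          rw [div_le_iff₀ hkpos] at this
          calc ((Finset.univ.filter (fun r => y ∈ C r)).card : ℝ)
              ≤ (2:ℝ) ^ t / 2 ^ n * ε * k := this
            _ = k * ((2:ℝ) ^ t / 2 ^ n * ε) := by ring
      _ = E.card * (k * ((2:ℝ) ^ t / 2 ^ n * ε)) := by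
          rw [Finset.sum_const, nsmul_eq_mul]
      _ = ((2:ℝ)^n / 2 - 1) * (k * ((2:ℝ) ^ t / 2 ^ n * ε)) := by
          rw [hEcard]
          have : (Fintype.card (LinearMap.ker φ) : ℝ) = (2:ℝ)^n / 2 := by
            have := hHcard
            have h2 : (2 * Fintype.card (LinearMap.ker φ) : ℝ) = (2:ℝ)^n := by
              exact_mod_cast congrArg (Nat.cast : ℕ → ℝ) this
            linarith
          rw [this]
  -- lower bound
  set S : Finset I := Finset.univ.filter (fun r => x ∈ dualSet (C r : Set (Fin n → ZMod 2))) with hS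
  set s : ℝ := (S.card : ℝ) with hs
  have hsk : s ≤ k := by
    rw [hs, hk]
    exact_mod_cast Finset.card_le_card (Finset.subset_univ S)
  have hs0 : 0 ≤ s := by positivity
  have hlower : s * ((2:ℝ)^t - 1) + (k - s) * ((2:ℝ)^t / 2 - 1) ≤ (N : ℝ) := by
    have hsplit : (N : ℝ) = (∑ r ∈ S, ((E.filter (fun y => y ∈ C r)).card : ℝ))
        + ∑ r ∈ Sᶜ, ((E.filter (fun y => y ∈ C r)).card : ℝ) := by
      rw [hN]
      push_cast
      rw [← Finset.sum_add_sum_compl S]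
    rw [hsplit]
    have h1 : s * ((2:ℝ)^t - 1) ≤ ∑ r ∈ S, ((E.filter (fun y => y ∈ C r)).card : ℝ) := by
      calc s * ((2:ℝ)^t - 1) = ∑ _r ∈ S, ((2:ℝ)^t - 1) := by
            rw [Finset.sum_const, nsmul_eq_mul, hs]
        _ ≤ _ := by
            apply Finset.sum_le_sum
            intro r hr
            rw [hQcard r]
            have hrS : x ∈ dualSet (C r : Set (Fin n → ZMod 2)) := by
              rw [hS] at hr
              simpa using hr
            linarith [hFdual r hrS]
    have h2 : (k - s) * ((2:ℝ)^t / 2 - 1) ≤ ∑ r ∈ Sᶜ, ((E.filter (fun y => y ∈ C r)).card : ℝ) := by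
      have hcompl : ((Sᶜ : Finset I).card : ℝ) = k - s := by
        rw [Finset.card_compl]
        rw [hk, hs]
        have : S.card ≤ Fintype.card I := Finset.card_le_card (Finset.subset_univ S)
        push_cast [Nat.cast_sub this]
        ring
      calc (k - s) * ((2:ℝ)^t / 2 - 1) = ∑ _r ∈ Sᶜ, ((2:ℝ)^t / 2 - 1) := by
            rw [Finset.sum_const, nsmul_eq_mul, hcompl]
        _ ≤ _ := by
            apply Finset.sum_le_sum
            intro r _
            rw [hQcard r]
            linarith [hFlow r]
    linarith
  -- conclude
  have key : s * ((2:ℝ)^t - 1) + (k - s) * ((2:ℝ)^t / 2 - 1)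
      ≤ ((2:ℝ)^n / 2 - 1) * (k * ((2:ℝ) ^ t / 2 ^ n * ε)) := le_trans hlower hupper
  have hprS : pr (fun r => x ∈ dualSet (C r : Set (Fin n → ZMod 2))) = s / k := by
    unfold pr
    rw [hs, hk, hS]
  rw [hprS, div_le_iff₀ hkpos]
  have hP : (0:ℝ) < 2 ^ t := by positivity
  have hNn : (0:ℝ) < 2 ^ n := by positivity
  have e2 : ((2:ℝ)^n / 2 - 1) * (k * ((2:ℝ) ^ t / 2 ^ n * ε))
      = k * (2:ℝ)^t * ε / 2 - k * (2:ℝ)^t * ε / 2^n := by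
    field_simp
  have key2 : s * ((2:ℝ)^t / 2) + k * ((2:ℝ)^t / 2) - k
      ≤ k * (2:ℝ)^t * ε / 2 - k * (2:ℝ)^t * ε / 2^n := by
    rw [← e2]
    calc s * ((2:ℝ)^t / 2) + k * ((2:ℝ)^t / 2) - k
        = s * ((2:ℝ)^t - 1) + (k - s) * ((2:ℝ)^t / 2 - 1) := by ring
      _ ≤ _ := key
  have key3 : s ≤ k * ε - 2 * k * ε / 2^n - k + 2 * k / 2^t := by
    have h5 : s * ((2:ℝ)^t / 2) ≤ (k * ε - 2 * k * ε / 2^n - k + 2 * k / 2^t) * ((2:ℝ)^t / 2) := by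
      calc s * ((2:ℝ)^t / 2) ≤ k * (2:ℝ)^t * ε / 2 - k * (2:ℝ)^t * ε / 2^n
            - k * ((2:ℝ)^t / 2) + k := by linarith
        _ = (k * ε - 2 * k * ε / 2^n - k + 2 * k / 2^t) * ((2:ℝ)^t / 2) := by
            field_simp
    have hhalf : (0:ℝ) < (2:ℝ)^t / 2 := by positivity
    exact le_of_mul_le_mul_right (by linarith [h5]) hhalf
  have e3 : ((1 - (2:ℝ) ^ t / 2 ^ n * ε) * (2 / 2 ^ t) + ε - 1) * k
      = k * ε - 2 * k * ε / 2^n - k + 2 * k / 2^t := by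
    field_simp
    ring
  rw [e3]
  exact key3
end

section
/- A family of linear codes {C_r} in F_2^n of constant dimension t that is optimally universal_2, i.e., for all nonzero x, Pr_r[x ∈ C_r] ≤ 2^(t-n)·(2^n - 2^(n-t))/(2^n - 1), has the property that its dual family {C_r^⊥} is also optimally universal_2, i.e., for all nonzero x, Pr_r[x ∈ C_r^⊥] ≤ 2^(-t)·(2^n - 2^t)/(2^n - 1). -/
open scoped Classical

open Finset

noncomputable def sgn {n : ℕ} (x c : Fin n → ZMod 2) : ℝ :=
  if (∑ i, c i * x i) = 0 then 1 else -1

lemma zmod2_cases (a : ZMod 2) : a = 0 ∨ a = 1 := by revert a; decide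

lemma sgn_flip {n : ℕ} (x c c0 : Fin n → ZMod 2) (h1 : (∑ i, c0 i * x i) = 1) :
    sgn x (c + c0) = - sgn x c := by
  unfold sgn
  have hs : (∑ i, (c + c0) i * x i) = (∑ i, c i * x i) + 1 := by
    rw [← h1, ← Finset.sum_add_distrib]
    congr 1; funext i; simp [add_mul]
  rw [hs]
  rcases zmod2_cases (∑ i, c i * x i) with h | h <;> rw [h] <;> norm_num <;> decide

lemma sum_sgn_filter_eq_zero {n : ℕ} (x : Fin n → ZMod 2)
    (S : Submodule (ZMod 2) (Fin n → ZMod 2))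
    (c0 : Fin n → ZMod 2) (hc0 : c0 ∈ S) (h1 : (∑ i, c0 i * x i) = 1) :
    ∑ c ∈ univ.filter (· ∈ S), sgn x c = 0 := by
  have hc0ne : c0 ≠ 0 := by
    intro h; rw [h] at h1; simp at h1
  refine Finset.sum_involution (fun c _ => c + c0) ?_ ?_ ?_ ?_
  · intro a _; rw [sgn_flip x a c0 h1]; ring
  · intro a _ _
    intro h
    apply hc0ne
    have := congrArg (· - a) h
    simpa using this
  · intro a ha
    simp only [mem_filter, mem_univ, true_and] at ha ⊢
    exact S.add_mem ha hc0
  · intro a _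
    have h2 : c0 + c0 = 0 := by
      funext i; simp [CharTwo.add_self_eq_zero]
    show a + c0 + c0 = a
    rw [add_assoc, h2, add_zero]

lemma sum_sgn_submodule {n t : ℕ} (x : Fin n → ZMod 2)
    (S : Submodule (ZMod 2) (Fin n → ZMod 2))
    (hdim : Module.finrank (ZMod 2) S = t) :
    ∑ c ∈ univ.filter (· ∈ S), sgn x c
      = if x ∈ dualSet (S : Set (Fin n → ZMod 2)) then (2:ℝ)^t else 0 := by
  by_cases hx : x ∈ dualSet (S : Set (Fin n → ZMod 2))
  · rw [if_pos hx]
    have hall : ∀ c ∈ univ.filter (· ∈ S), sgn x c = 1 := by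
      intro c hc
      simp only [mem_filter, mem_univ, true_and] at hc
      unfold sgn
      rw [if_pos (hx c hc)]
    rw [Finset.sum_congr rfl hall, Finset.sum_const, nsmul_eq_mul, mul_one]
    have hcard : (univ.filter (· ∈ S)).card = 2 ^ t := by
      have h1 : Fintype.card S = 2 ^ t := by
        rw [Module.card_eq_pow_finrank (K := ZMod 2) (V := S), ZMod.card, hdim]
      have h2 : Fintype.card {c : Fin n → ZMod 2 // c ∈ S} = (univ.filter (· ∈ S)).card :=
        Fintype.card_subtype _
      have h3 : Fintype.card S = Fintype.card {c : Fin n → ZMod 2 // c ∈ S} :=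
        Fintype.card_congr (Equiv.subtypeEquivRight fun _ => Iff.rfl)
      rw [← h2, ← h3, h1]
    rw [hcard]
    push_cast
    ring
  · rw [if_neg hx]
    obtain ⟨c0, hc0S, hc0⟩ : ∃ c0 ∈ S, (∑ i, c0 i * x i) ≠ 0 := by
      by_contra h
      push_neg at h
      exact hx fun c hc => h c hc
    have h1 : (∑ i, c0 i * x i) = 1 := by
      rcases zmod2_cases (∑ i, c0 i * x i) with h | h
      · exact absurd h hc0
      · exact h
    exact sum_sgn_filter_eq_zero x S c0 hc0S h1

set_option maxHeartbeats 1000000 in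
/-- if a family of codes of constant dimension `t` is optimally universal₂,
then the dual family is optimally universal₂. -/
theorem stmt2 {n t : ℕ} {I : Type*} [Fintype I] [Nonempty I]
    (C : I → Submodule (ZMod 2) (Fin n → ZMod 2))
    (hdim : ∀ r, Module.finrank (ZMod 2) (C r) = t)
    (hopt : ∀ x : Fin n → ZMod 2, x ≠ 0 →
      pr (fun r => x ∈ C r) ≤
        (2 : ℝ) ^ t / 2 ^ n * (((2 : ℝ) ^ n - 2 ^ (n - t)) / ((2 : ℝ) ^ n - 1))) :
    ∀ x : Fin n → ZMod 2, x ≠ 0 →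
      pr (fun r => x ∈ dualSet (C r : Set (Fin n → ZMod 2))) ≤
        (1 / (2 : ℝ) ^ t) * (((2 : ℝ) ^ n - 2 ^ t) / ((2 : ℝ) ^ n - 1)) := by
  intro x hx
  obtain ⟨r0⟩ := ‹Nonempty I›
  -- basic numeric facts
  have htn : t ≤ n := by
    have h := Submodule.finrank_le (C r0)
    rw [hdim r0] at h
    simpa [Module.finrank_fin_fun] using h
  have hn : 0 < n := by
    rcases Nat.eq_zero_or_pos n with h | h
    · subst h
      exact absurd (funext fun i => i.elim0) hx
    · exact h
  have h2n : (1 : ℝ) < 2 ^ n := by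
    have h := pow_lt_pow_right₀ (a := (2:ℝ)) (by norm_num) hn
    simpa using h
  have h2n1 : (0 : ℝ) < 2 ^ n - 1 := by linarith
  have h2t : (0 : ℝ) < 2 ^ t := by positivity
  have hK : (0 : ℝ) < (Fintype.card I : ℝ) := by
    exact_mod_cast Fintype.card_pos
  set K : ℝ := (Fintype.card I : ℝ) with hKdef
  set p : ℝ := ((2:ℝ) ^ t - 1) / ((2:ℝ) ^ n - 1) with hpdef
  have hpow : (2:ℝ) ^ t * (2:ℝ) ^ (n - t) = 2 ^ n := by
    rw [← pow_add]; congr 1; omega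
  -- the bound in hopt equals p
  have hpeq : (2 : ℝ) ^ t / 2 ^ n * (((2 : ℝ) ^ n - 2 ^ (n - t)) / ((2 : ℝ) ^ n - 1)) = p := by
    rw [hpdef]
    field_simp
    nlinarith [hpow]
  -- counting function
  set N : (Fin n → ZMod 2) → ℕ := fun c => (univ.filter (fun r => c ∈ C r)).card with hNdef
  have hcardC : ∀ r, (univ.filter (fun c => c ∈ C r)).card = 2 ^ t := by
    intro r
    have h1 : Fintype.card (C r) = 2 ^ t := by
      rw [Module.card_eq_pow_finrank (K := ZMod 2) (V := C r), ZMod.card, hdim]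
    have h2 : Fintype.card {c : Fin n → ZMod 2 // c ∈ C r}
        = (univ.filter (fun c => c ∈ C r)).card := Fintype.card_subtype _
    have h3 : Fintype.card (C r) = Fintype.card {c : Fin n → ZMod 2 // c ∈ C r} :=
      Fintype.card_congr (Equiv.subtypeEquivRight fun _ => Iff.rfl)
    rw [← h2, ← h3, h1]
  have hcardV : Fintype.card (Fin n → ZMod 2) = 2 ^ n := by
    simp [ZMod.card]
  -- total count
  have htot : ∑ c : Fin n → ZMod 2, N c = Fintype.card I * 2 ^ t := by
    have : ∑ c : Fin n → ZMod 2, N c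
        = ∑ c : Fin n → ZMod 2, ∑ r : I, (if c ∈ C r then 1 else 0) := by
      refine Finset.sum_congr rfl fun c _ => ?_
      show (univ.filter (fun r => c ∈ C r)).card = _
      exact Finset.card_filter _ _
    rw [this, Finset.sum_comm]
    have : ∀ r : I, (∑ c : Fin n → ZMod 2, if c ∈ C r then 1 else 0) = 2 ^ t := by
      intro r
      rw [← Finset.card_filter]
      exact hcardC r
    rw [Finset.sum_congr rfl fun r _ => this r, Finset.sum_const, smul_eq_mul,
      Finset.card_univ]
  have hN0 : N 0 = Fintype.card I := by
    rw [hNdef]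
    simp only []
    rw [Finset.filter_true_of_mem fun r _ => (C r).zero_mem, Finset.card_univ]
  -- sum over nonzero c
  have hsumNe : ∑ c ∈ univ.erase (0 : Fin n → ZMod 2), (N c : ℝ) = K * (2 ^ t - 1) := by
    have h1 : ∑ c ∈ univ.erase (0 : Fin n → ZMod 2), N c + N 0
        = ∑ c : Fin n → ZMod 2, N c := Finset.sum_erase_add _ _ (mem_univ _)
    have hA : ((∑ c : Fin n → ZMod 2, N c : ℕ) : ℝ) = K * 2 ^ t := by
      rw [htot]; push_cast [hKdef]; ring
    have hB : ∑ c ∈ univ.erase (0 : Fin n → ZMod 2), (N c : ℝ) + (N 0 : ℝ)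
        = ((∑ c : Fin n → ZMod 2, N c : ℕ) : ℝ) := by
      rw [← h1]; push_cast; ring
    have hC : (N 0 : ℝ) = K := by rw [hN0, hKdef]
    linarith
  -- pointwise upper bound
  have hble : ∀ c ∈ univ.erase (0 : Fin n → ZMod 2), (N c : ℝ) ≤ K * p := by
    intro c hc
    have hcne : c ≠ 0 := (Finset.mem_erase.mp hc).1
    have := hopt c hcne
    rw [hpeq] at this
    unfold pr at this
    rw [div_le_iff₀ hK] at this
    calc (N c : ℝ) = ((univ.filter fun r => c ∈ C r).card : ℝ) := rfl
      _ ≤ p * K := this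
      _ = K * p := mul_comm _ _
  -- equality forced
  have hcardErase : (univ.erase (0 : Fin n → ZMod 2)).card = 2 ^ n - 1 := by
    rw [Finset.card_erase_of_mem (mem_univ _), Finset.card_univ, hcardV]
  have hsumRHS : ∑ _c ∈ univ.erase (0 : Fin n → ZMod 2), K * p = K * (2 ^ t - 1) := by
    rw [Finset.sum_const, hcardErase, nsmul_eq_mul]
    have hcast : ((2 ^ n - 1 : ℕ) : ℝ) = 2 ^ n - 1 := by
      have : (1 : ℕ) ≤ 2 ^ n := Nat.one_le_two_pow
      push_cast [this]
      ring
    rw [hcast, hpdef]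
    field_simp
  have hNeq : ∀ c ∈ univ.erase (0 : Fin n → ZMod 2), (N c : ℝ) = K * p := by
    have := (Finset.sum_eq_sum_iff_of_le hble).mp (by rw [hsumNe, hsumRHS])
    intro c hc
    exact this c hc
  -- character sum over full space is zero
  have hfull : ∑ c : Fin n → ZMod 2, sgn x c = 0 := by
    obtain ⟨i, hi⟩ : ∃ i, x i ≠ 0 := by
      by_contra h
      push_neg at h
      exact hx (funext h)
    have hxi : x i = 1 := by
      rcases zmod2_cases (x i) with h | h
      · exact absurd h hi
      · exact h
    have h1 : (∑ j, (Pi.single i 1 : Fin n → ZMod 2) j * x j) = 1 := by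
      rw [Finset.sum_eq_single i]
      · rw [Pi.single_eq_same, one_mul, hxi]
      · intro b _ hb
        rw [Pi.single_eq_of_ne hb, zero_mul]
      · intro h; exact absurd (mem_univ i) h
    have := sum_sgn_filter_eq_zero x ⊤ (Pi.single i 1) trivial h1
    simpa using this
  -- swap double sum
  have hswap : ∑ r : I, (∑ c ∈ univ.filter (· ∈ C r), sgn x c)
      = ∑ c : Fin n → ZMod 2, sgn x c * (N c : ℝ) := by
    have h1 : ∀ r : I, (∑ c ∈ univ.filter (· ∈ C r), sgn x c)
        = ∑ c : Fin n → ZMod 2, (if c ∈ C r then sgn x c else 0) := fun r =>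
      Finset.sum_filter _ _
    rw [Finset.sum_congr rfl fun r _ => h1 r, Finset.sum_comm]
    refine Finset.sum_congr rfl fun c _ => ?_
    rw [← Finset.sum_filter, Finset.sum_const, nsmul_eq_mul]
    exact mul_comm _ _
  -- LHS of hswap
  set M : ℕ := (univ.filter fun r => x ∈ dualSet ((C r : Set (Fin n → ZMod 2)))).card with hMdef
  have hlhs : ∑ r : I, (∑ c ∈ univ.filter (· ∈ C r), sgn x c) = (M : ℝ) * 2 ^ t := by
    have h1 : ∀ r : I, (∑ c ∈ univ.filter (· ∈ C r), sgn x c)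
        = if x ∈ dualSet ((C r : Set (Fin n → ZMod 2))) then (2:ℝ)^t else 0 := fun r =>
      sum_sgn_submodule x (C r) (hdim r)
    rw [Finset.sum_congr rfl fun r _ => h1 r, ← Finset.sum_filter, Finset.sum_const,
      nsmul_eq_mul]
  -- RHS of hswap
  have hsgn0 : sgn x (0 : Fin n → ZMod 2) = 1 := by
    unfold sgn
    rw [if_pos]
    simp
  have hsumErase : ∑ c ∈ univ.erase (0 : Fin n → ZMod 2), sgn x c = -1 := by
    have := Finset.sum_erase_add univ (sgn x) (mem_univ (0 : Fin n → ZMod 2))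
    rw [hfull] at this
    rw [hsgn0] at this
    linarith
  have hrhs : ∑ c : Fin n → ZMod 2, sgn x c * (N c : ℝ) = K - K * p := by
    have h1 : ∑ c ∈ univ.erase (0 : Fin n → ZMod 2), sgn x c * (N c : ℝ)
        + sgn x 0 * (N 0 : ℝ) = ∑ c : Fin n → ZMod 2, sgn x c * (N c : ℝ) :=
      Finset.sum_erase_add _ _ (mem_univ _)
    have h2 : ∑ c ∈ univ.erase (0 : Fin n → ZMod 2), sgn x c * (N c : ℝ)
        = ∑ c ∈ univ.erase (0 : Fin n → ZMod 2), sgn x c * (K * p) :=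
      Finset.sum_congr rfl fun c hc => by rw [hNeq c hc]
    rw [← h1, h2, ← Finset.sum_mul, hsumErase, hsgn0, hN0, one_mul]
    rw [hKdef]
    ring
  have hkey : (M : ℝ) * 2 ^ t = K - K * p := by
    rw [← hlhs, hswap, hrhs]
  -- conclude
  have hMK : (M : ℝ) / K = (1 - p) / 2 ^ t := by
    rw [div_eq_div_iff (ne_of_gt hK) (ne_of_gt h2t)]
    linear_combination hkey
  have hgoal : pr (fun r => x ∈ dualSet ((C r : Set (Fin n → ZMod 2)))) = (M : ℝ) / K := rfl
  rw [hgoal, hMK]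
  apply le_of_eq
  have h1p : 1 - p = ((2:ℝ) ^ n - 2 ^ t) / ((2:ℝ) ^ n - 1) := by
    rw [hpdef, eq_div_iff (ne_of_gt h2n1), sub_mul, div_mul_cancel₀ _ (ne_of_gt h2n1), one_mul]
    ring
  rw [h1p, one_div, inv_mul_eq_div]
end

section
/- For every n ≥ 1 and every 1 ≤ t ≤ n, there exists a t-dimensional linear code C ⊆ F_2^n such that for all 1 ≤ k ≤ n, the number A_k of weight-k codewords of C satisfies A_k · 2^(n-t) < (n+1)·binom(n,k); equivalently ε(C) ≤ n+1, so the permuted code family {σ(C) : σ ∈ S_n} is (n+1)-almost universal_2. -/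
open scoped Classical

noncomputable def wt {n : ℕ} (x : Fin n → ZMod 2) : ℕ :=
  (Finset.univ.filter (fun i => x i ≠ 0)).card

noncomputable def permCode {n : ℕ} (σ : Equiv.Perm (Fin n))
    (C : Submodule (ZMod 2) (Fin n → ZMod 2)) : Submodule (ZMod 2) (Fin n → ZMod 2) :=
  C.map (LinearMap.funLeft (ZMod 2) (ZMod 2) σ)

/-- Number of codewords of `C` of Hamming weight `k`. -/
noncomputable def wtCount {n : ℕ} (C : Submodule (ZMod 2) (Fin n → ZMod 2)) (k : ℕ) : ℕ :=
  (Finset.univ.filter (fun c : Fin n → ZMod 2 => c ∈ C ∧ wt c = k)).card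

/-!
Take a random systematic code `{x | x₂ = M x₁}`, `M` a uniform `(n-t) × t` matrix. For `x ≠ 0`
the event `x ∈ C` has probability `2^{-(n-t)}` if `x₁ ≠ 0` (then `M ↦ M x₁` is a surjective
linear map) and probability `0` if `x₁ = 0`. So the mean over `M` of
`∑_{1 ≤ k ≤ n} A_k / binom(n,k)` is at most `n · 2^{-(n-t)}`, and some `M` makes every term that
small. For the permuted family, `σ ↦ x ∘ σ` hits each vector of weight `wt x` equally often, so
`Pr_σ[x ∈ σ(C)] = A_{wt x} / binom(n, wt x)`.
-/

open Finset
open scoped Matrix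

lemma ZMod.two_funext_of_eq_zero_iff {ι : Type*} {x y : ι → ZMod 2}
    (h : ∀ i, x i = 0 ↔ y i = 0) : x = y := by
  funext i
  have hi := h i
  generalize x i = a, y i = b at hi
  revert a b
  decide

section Weight

variable {n : ℕ}

lemma wt_le (x : Fin n → ZMod 2) : wt x ≤ n :=
  hammingNorm_le_card_fintype.trans_eq (Fintype.card_fin n)

lemma wt_comp_perm (x : Fin n → ZMod 2) (σ : Equiv.Perm (Fin n)) : wt (x ∘ σ) = wt x :=
  Finset.card_equiv σ (by simp)

lemma card_wt_eq (k : ℕ) : #{x : Fin n → ZMod 2 | wt x = k} = n.choose k := calc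
  _ = #(powersetCard k (univ : Finset (Fin n))) := by
    refine card_nbij' (fun x => ({i | x i ≠ 0} : Finset (Fin n)))
      (fun s i => if i ∈ s then 1 else 0) ?_ ?_ ?_ ?_
    · intro x hx
      simpa [wt] using hx
    · intro s hs
      simp only [mem_coe, mem_powersetCard] at hs
      simp [wt, ← hs.2]
    · intro x _
      exact ZMod.two_funext_of_eq_zero_iff fun i => by by_cases h : x i = 0 <;> simp [h]
    · intro s _
      ext i
      by_cases h : i ∈ s <;> simp [h]
  _ = n.choose k := by simp

lemma exists_perm_comp_eq {x y : Fin n → ZMod 2} (h : wt x = wt y) :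
    ∃ τ : Equiv.Perm (Fin n), x ∘ τ = y := by
  have hsupp : Fintype.card {i // y i ≠ 0} = Fintype.card {i // x i ≠ 0} := by
    simpa only [Fintype.card_subtype, wt] using h.symm
  have hcompl : Fintype.card {i // ¬ y i ≠ 0} = Fintype.card {i // ¬ x i ≠ 0} := by
    rw [Fintype.card_subtype_compl (p := fun i => y i ≠ 0),
      Fintype.card_subtype_compl (p := fun i => x i ≠ 0), hsupp]
  refine ⟨Equiv.subtypeCongr (Fintype.equivOfCardEq hsupp) (Fintype.equivOfCardEq hcompl),
    ZMod.two_funext_of_eq_zero_iff fun i => ?_⟩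
  by_cases hi : y i ≠ 0
  · simp [Equiv.subtypeCongr, hi, ((Fintype.equivOfCardEq hsupp) ⟨i, hi⟩).2]
  · simp [Equiv.subtypeCongr, not_not.1 hi,
      not_not.1 ((Fintype.equivOfCardEq hcompl) ⟨i, hi⟩).2]

end Weight

section Permutation

variable {n : ℕ} (C : Submodule (ZMod 2) (Fin n → ZMod 2))

lemma mem_permCode_iff {σ : Equiv.Perm (Fin n)} {x : Fin n → ZMod 2} :
    x ∈ permCode σ C ↔ x ∘ σ.symm ∈ C := by
  refine ⟨?_, fun hx => ⟨x ∘ σ.symm, hx, ?_⟩⟩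
  · rintro ⟨c, hc, rfl⟩
    simpa [Function.comp_def, LinearMap.funLeft_apply] using hc
  · ext i
    simp [LinearMap.funLeft_apply]

lemma card_comp_mem_eq_of_wt_eq {x y : Fin n → ZMod 2} (h : wt x = wt y) :
    #{σ : Equiv.Perm (Fin n) | x ∘ σ ∈ C} = #{σ : Equiv.Perm (Fin n) | y ∘ σ ∈ C} := by
  obtain ⟨τ, rfl⟩ := exists_perm_comp_eq h
  exact (card_equiv (Equiv.mulLeft τ) (by simp [Function.comp_assoc])).symm

lemma sum_card_comp_mem (k : ℕ) :
    ∑ y with wt y = k, #{σ : Equiv.Perm (Fin n) | y ∘ σ ∈ C} =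
      n.factorial * wtCount C k := by
  have hfiber (σ : Equiv.Perm (Fin n)) :
      #{y : Fin n → ZMod 2 | wt y = k ∧ y ∘ σ ∈ C} = wtCount C k := by
    refine card_nbij' (· ∘ σ) (· ∘ σ.symm) ?_ ?_ ?_ ?_
    · intro y hy
      simp_all [wt_comp_perm]
    · intro c hc
      simp_all [Function.comp_assoc, wt_comp_perm]
    · intro y _
      simp [Function.comp_assoc]
    · intro c _
      simp [Function.comp_assoc]
  calc ∑ y with wt y = k, #{σ : Equiv.Perm (Fin n) | y ∘ σ ∈ C}
      = ∑ σ : Equiv.Perm (Fin n), #{y : Fin n → ZMod 2 | wt y = k ∧ y ∘ σ ∈ C} := by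
        simpa [bipartiteAbove, bipartiteBelow, filter_filter] using
          sum_card_bipartiteAbove_eq_sum_card_bipartiteBelow
            (fun y (σ : Equiv.Perm (Fin n)) => y ∘ σ ∈ C) (s := {y | wt y = k}) (t := univ)
    _ = n.factorial * wtCount C k := by simp [hfiber, Fintype.card_perm]

lemma card_comp_mem_mul_choose (x : Fin n → ZMod 2) :
    #{σ : Equiv.Perm (Fin n) | x ∘ σ ∈ C} * n.choose (wt x) =
      n.factorial * wtCount C (wt x) := by
  rw [← sum_card_comp_mem, ← card_wt_eq,
    sum_congr rfl fun y hy => card_comp_mem_eq_of_wt_eq C (mem_filter.1 hy).2, sum_const,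
    smul_eq_mul, mul_comm]

lemma pr_mem_permCode (x : Fin n → ZMod 2) :
    pr (fun σ => x ∈ permCode σ C) = wtCount C (wt x) / n.choose (wt x) := by
  have hinv : #{σ : Equiv.Perm (Fin n) | x ∈ permCode σ C} =
      #{σ : Equiv.Perm (Fin n) | x ∘ σ ∈ C} :=
    card_equiv (Equiv.inv _) (by simp [mem_permCode_iff, Equiv.Perm.inv_def])
  have hchoose : (n.choose (wt x) : ℝ) ≠ 0 := by exact_mod_cast (Nat.choose_pos (wt_le x)).ne'
  rw [pr, hinv, Fintype.card_perm, Fintype.card_fin, div_eq_div_iff (by positivity) hchoose]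
  exact_mod_cast (card_comp_mem_mul_choose C x).trans (mul_comm _ _)

end Permutation

lemma AddMonoidHom.card_fiber_mul_card_eq_of_surjective {G H : Type*} [AddGroup G] [Fintype G]
    [AddMonoid H] [Fintype H] [DecidableEq H] (f : G →+ H) (hf : Function.Surjective f) (y : H) :
    #{g | f g = y} * Fintype.card H = Fintype.card G := by
  calc #{g | f g = y} * Fintype.card H = ∑ z : H, #{g | f g = z} := by
        rw [sum_congr rfl fun z _ => card_fiber_eq_of_mem_range f (hf z) (hf y), sum_const,
          card_univ, smul_eq_mul, mul_comm]
    _ = Fintype.card G := (card_eq_sum_card_fiberwise fun _ _ => mem_coe.2 (mem_univ _)).symm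

section Systematic

variable {K : Type*} [Field K]

lemma Matrix.mulVec_left_surjective {m ι : Type*} [Fintype ι] [DecidableEq ι] {u : ι → K}
    (hu : u ≠ 0) : Function.Surjective fun M : Matrix m ι K => M *ᵥ u := by
  obtain ⟨j, hj⟩ : ∃ j, u j ≠ 0 := Function.ne_iff.1 hu
  refine fun w => ⟨Matrix.vecMulVec w (Pi.single j (u j)⁻¹), ?_⟩
  simp [Matrix.vecMulVec_mulVec, inv_mul_cancel₀ hj]

variable {n t m : ℕ}

variable (K) in
def splitCoordsEquiv (h : t + m = n) : (Fin n → K) ≃ₗ[K] (Fin t → K) × (Fin m → K) :=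
  (LinearEquiv.funCongrLeft K K (finSumFinEquiv.trans (finCongr h))).trans
    (LinearEquiv.sumArrowLequivProdArrow _ _ K K)

def systematicCode (h : t + m = n) (M : Matrix (Fin m) (Fin t) K) : Submodule K (Fin n → K) :=
  M.mulVecLin.graph.comap (splitCoordsEquiv K h).toLinearMap

lemma mem_systematicCode {h : t + m = n} {M : Matrix (Fin m) (Fin t) K} {x : Fin n → K} :
    x ∈ systematicCode h M ↔ (splitCoordsEquiv K h x).2 = M *ᵥ (splitCoordsEquiv K h x).1 :=
  LinearMap.mem_graph_iff _ _

lemma finrank_systematicCode (h : t + m = n) (M : Matrix (Fin m) (Fin t) K) :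
    Module.finrank K (systematicCode h M) = t := by
  rw [systematicCode, Submodule.comap_equiv_eq_map_symm, LinearEquiv.finrank_map_eq,
    LinearMap.graph_eq_range_prod, LinearMap.finrank_range_of_inj, Module.finrank_fin_fun]
  exact fun u v huv => congrArg Prod.fst huv

variable [Fintype K] [DecidableEq K]

lemma card_mem_systematicCode_mul_le (h : t + m = n) {x : Fin n → K} (hx : x ≠ 0) :
    #{M : Matrix (Fin m) (Fin t) K | x ∈ systematicCode h M} * Fintype.card (Fin m → K) ≤
      Fintype.card (Matrix (Fin m) (Fin t) K) := by
  set p := splitCoordsEquiv K h x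
  have hmem (M : Matrix (Fin m) (Fin t) K) : x ∈ systematicCode h M ↔ M *ᵥ p.1 = p.2 :=
    mem_systematicCode.trans eq_comm
  by_cases hu : p.1 = 0
  · have hnot (M : Matrix (Fin m) (Fin t) K) : x ∉ systematicCode h M := fun hM =>
      hx <| (splitCoordsEquiv K h).map_eq_zero_iff.1 <|
        Prod.ext hu (by simpa [hu] using ((hmem M).1 hM).symm)
    simp [hnot]
  · simp_rw [hmem]
    exact ((Matrix.mulVec.addMonoidHomLeft p.1).card_fiber_mul_card_eq_of_surjective
      (Matrix.mulVec_left_surjective hu) p.2).le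

end Systematic

section Averaging

variable {ι : Type*} [Fintype ι] {n q : ℕ} (C : ι → Submodule (ZMod 2) (Fin n → ZMod 2))

lemma sum_wtCount_mul_le
    (hC : ∀ x : Fin n → ZMod 2, x ≠ 0 → #{i | x ∈ C i} * q ≤ Fintype.card ι) {k : ℕ}
    (hk : 1 ≤ k) : (∑ i, wtCount (C i) k) * q ≤ n.choose k * Fintype.card ι := by
  have hswap : ∑ i, wtCount (C i) k = ∑ x with wt x = k, #{i | x ∈ C i} := by
    simpa [bipartiteAbove, bipartiteBelow, filter_filter, wtCount, and_comm] using
      sum_card_bipartiteAbove_eq_sum_card_bipartiteBelow (fun i (x : Fin n → ZMod 2) => x ∈ C i)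
        (s := univ) (t := {x | wt x = k})
  calc (∑ i, wtCount (C i) k) * q = ∑ x with wt x = k, #{i | x ∈ C i} * q := by
        rw [hswap, sum_mul]
    _ ≤ ∑ x with wt x = k, Fintype.card ι := sum_le_sum fun x hx => hC x fun hx0 => by
        simp [hx0, wt] at hx; omega
    _ = n.choose k * Fintype.card ι := by rw [sum_const, card_wt_eq, smul_eq_mul]

lemma exists_wtCount_mul_le [Nonempty ι]
    (hC : ∀ x : Fin n → ZMod 2, x ≠ 0 → #{i | x ∈ C i} * q ≤ Fintype.card ι) :
    ∃ i, ∀ k, 1 ≤ k → k ≤ n → wtCount (C i) k * q ≤ n * n.choose k := by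
  let ratio (i : ι) (k : ℕ) : ℝ := wtCount (C i) k * q / n.choose k
  have hsum : ∑ i, ∑ k ∈ Icc 1 n, ratio i k ≤ ∑ _i : ι, (n : ℝ) := by
    rw [sum_comm, sum_const, card_univ, nsmul_eq_mul]
    calc ∑ k ∈ Icc 1 n, ∑ i, ratio i k ≤ ∑ k ∈ Icc 1 n, (Fintype.card ι : ℝ) := by
          refine sum_le_sum fun k hk => ?_
          obtain ⟨hk1, hkn⟩ := mem_Icc.1 hk
          rw [← sum_div, div_le_iff₀ (by exact_mod_cast Nat.choose_pos hkn), ← sum_mul,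
            mul_comm (Fintype.card ι : ℝ)]
          exact_mod_cast sum_wtCount_mul_le C hC hk1
      _ = Fintype.card ι * n := by simp [mul_comm]
  obtain ⟨i, -, hi⟩ := exists_le_of_sum_le univ_nonempty hsum
  refine ⟨i, fun k hk1 hkn => ?_⟩
  have hk : ratio i k ≤ n :=
    (single_le_sum (fun _ _ => by positivity) (mem_Icc.2 ⟨hk1, hkn⟩)).trans hi
  rw [div_le_iff₀ (by exact_mod_cast Nat.choose_pos hkn)] at hk
  exact_mod_cast hk

end Averaging

theorem stmt10_general {n t : ℕ} (htn : t ≤ n) :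
    ∃ C : Submodule (ZMod 2) (Fin n → ZMod 2),
      Module.finrank (ZMod 2) C = t ∧
      (∀ k, 1 ≤ k → k ≤ n → wtCount C k * 2 ^ (n - t) < (n + 1) * Nat.choose n k) ∧
      (∀ x : Fin n → ZMod 2, x ≠ 0 →
        pr (fun σ : Equiv.Perm (Fin n) => x ∈ permCode σ C) ≤
          ((n : ℝ) + 1) * ((2 : ℝ) ^ t / 2 ^ n)) := by
  have h : t + (n - t) = n := Nat.add_sub_cancel' htn
  obtain ⟨M, hM⟩ := exists_wtCount_mul_le (systematicCode (K := ZMod 2) h) (q := 2 ^ (n - t))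
    fun x hx => by simpa using card_mem_systematicCode_mul_le h hx
  refine ⟨systematicCode h M, finrank_systematicCode h M, fun k hk1 hkn => ?_, fun x hx => ?_⟩
  · calc wtCount (systematicCode h M) k * 2 ^ (n - t) ≤ n * n.choose k := hM k hk1 hkn
      _ < (n + 1) * n.choose k := by gcongr; exacts [Nat.choose_pos hkn, n.lt_succ_self]
  · have hA : (wtCount (systematicCode h M) (wt x) : ℝ) * 2 ^ (n - t) ≤
        n * n.choose (wt x) := by
      exact_mod_cast hM (wt x) (hammingNorm_pos_iff.2 hx) (wt_le x)
    have hchoose : (0 : ℝ) < n.choose (wt x) := by exact_mod_cast Nat.choose_pos (wt_le x)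
    have hpow : (2 : ℝ) ^ n = 2 ^ t * 2 ^ (n - t) := by rw [← pow_add, h]
    rw [pr_mem_permCode, hpow, div_le_iff₀ hchoose]
    field_simp
    exact hA.trans (mul_le_mul_of_nonneg_right (by linarith) hchoose.le)

/-- for every `1 ≤ t ≤ n` there is a `t`-dimensional code `C ⊆ F_2^n` whose
weight enumerator satisfies `A_k · 2^(n-t) < (n+1)·binom(n,k)` for all `1 ≤ k ≤ n`,
so that the permuted family `{σ(C)}` is `(n+1)`-almost universal₂. -/
theorem stmt10 {n t : ℕ} (hn : 1 ≤ n) (ht1 : 1 ≤ t) (htn : t ≤ n) :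
    ∃ C : Submodule (ZMod 2) (Fin n → ZMod 2),
      Module.finrank (ZMod 2) C = t ∧
      (∀ k, 1 ≤ k → k ≤ n → wtCount C k * 2 ^ (n - t) < (n + 1) * Nat.choose n k) ∧
      (∀ x : Fin n → ZMod 2, x ≠ 0 →
        pr (fun σ : Equiv.Perm (Fin n) => x ∈ permCode σ C) ≤
          ((n : ℝ) + 1) * ((2 : ℝ) ^ t / 2 ^ n)) :=
  stmt10_general htn
end

section
/- Let {C_r} be an ε-almost universal_2 code family in F_2^n (ε ≥ 1) with maximum dimension t_max = nR. Suppose the channel adds a fixed error x ∈ F_2^n of Hamming weight k, and decoding by minimum Hamming distance fails only if some nonzero codeword y ∈ C_r has weight ≤ k (y ≠ x). Then the average failure probability satisfies E_r[P_hd(x; C_r)] ≤ ε · 2^(-n·[1 - h(min{k/n, 1/2}) - R]_+), where h is binary entropy and [a]_+ = max{a, 0}. -/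
/-!
Union bound over the nonzero words of weight at most `k`: each lies in `C_r` with probability
at most `2^(t-n) ε`, and there are at most `2^(n h(min(k/n, 1/2)))` of them. For `k/n ≤ 1/2`
this count follows from `Σ_{i ≤ k} C(n,i) p^k (1-p)^(n-k) ≤ (p + (1-p))^n = 1` at `p = k/n`,
since `p^k (1-p)^(n-k) = 2^(-n h(p))`. The positive part `[·]_+` in the exponent comes from
the trivial bound `P_hd ≤ 1 ≤ ε`.
-/

open scoped Classical

/-- Binary entropy function (base-2 logarithm). -/
noncomputable def H2 (p : ℝ) : ℝ := -(p * Real.logb 2 p) - (1 - p) * Real.logb 2 (1 - p)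

open Finset

lemma pr_le_one {I : Type*} [Fintype I] (P : I → Prop) : pr P ≤ 1 :=
  div_le_one_of_le₀ (by exact_mod_cast card_filter_le _ _) (Nat.cast_nonneg _)

lemma pr_mono {I : Type*} [Fintype I] {P Q : I → Prop} (h : ∀ r, P r → Q r) :
    pr P ≤ pr Q := by
  unfold pr
  gcongr with r
  exact h r

lemma pr_exists_le_sum {I α : Type*} [Fintype I] (S : Finset α) (Q : α → I → Prop) :
    pr (fun r => ∃ y ∈ S, Q y r) ≤ ∑ y ∈ S, pr (Q y) := by
  unfold pr
  rw [← sum_div]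
  gcongr
  -- `_` keeps the goal's decidability instance for the filter, which differs from the elaborated one
  calc (_ : ℝ)
      ≤ (S.biUnion fun y => univ.filter (Q y)).card := by
        gcongr
        intro r hr
        simpa using hr
    _ ≤ ∑ y ∈ S, ((univ.filter (Q y)).card : ℝ) := by exact_mod_cast card_biUnion_le

lemma ZMod.two_eq_of_ne_zero_iff {a b : ZMod 2} (h : a ≠ 0 ↔ b ≠ 0) : a = b := by
  revert a b; decide

lemma card_wt_le_le_sum_choose (n k : ℕ) :
    (univ.filter fun y : Fin n → ZMod 2 => wt y ≤ k).card ≤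
      ∑ i ∈ range (k + 1), n.choose i := by
  calc (univ.filter fun y : Fin n → ZMod 2 => wt y ≤ k).card
      ≤ ((range (k + 1)).biUnion fun i => powersetCard i (univ : Finset (Fin n))).card := by
        refine card_le_card_of_injOn (fun y => univ.filter fun i => y i ≠ 0) ?_ ?_
        · intro y hy
          simp only [coe_filter, mem_univ, true_and, Set.mem_ofPred_eq] at hy
          simpa [mem_powersetCard, wt, Nat.lt_succ_iff] using hy
        · intro y _ z _ hyz
          funext i
          exact ZMod.two_eq_of_ne_zero_iff (by simpa using Finset.ext_iff.mp hyz i)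
    _ ≤ ∑ i ∈ range (k + 1), (powersetCard i (univ : Finset (Fin n))).card := card_biUnion_le
    _ = ∑ i ∈ range (k + 1), n.choose i := by simp [card_powersetCard]

lemma pr_exists_mem_le_card_mul {I α : Type*} [Fintype I] (S : Finset α) (C : I → Set α)
    {δ : ℝ} (h : ∀ y ∈ S, pr (fun r => y ∈ C r) ≤ δ) :
    pr (fun r => ∃ y ∈ S, y ∈ C r) ≤ S.card * δ :=
  calc pr (fun r => ∃ y ∈ S, y ∈ C r) ≤ ∑ y ∈ S, pr (fun r => y ∈ C r) :=
        pr_exists_le_sum S fun y r => y ∈ C r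
    _ ≤ S.card * δ := by simpa using sum_le_sum h

lemma pow_mul_one_sub_pow_le {p : ℝ} (hp0 : 0 ≤ p) (hp : p ≤ 1 / 2) {i k n : ℕ} (hik : i ≤ k)
    (hkn : k ≤ n) : p ^ k * (1 - p) ^ (n - k) ≤ p ^ i * (1 - p) ^ (n - i) := by
  have hp1 : 0 ≤ 1 - p := by linarith
  calc p ^ k * (1 - p) ^ (n - k) = p ^ i * p ^ (k - i) * (1 - p) ^ (n - k) := by
        rw [← pow_add, Nat.add_sub_cancel' hik]
    _ ≤ p ^ i * (1 - p) ^ (k - i) * (1 - p) ^ (n - k) := by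
        gcongr
        linarith
    _ = p ^ i * (1 - p) ^ (n - i) := by
        rw [mul_assoc, ← pow_add]
        congr 2
        omega

lemma sum_choose_mul_pow_le_one {p : ℝ} (hp0 : 0 ≤ p) (hp : p ≤ 1 / 2) {k n : ℕ} (hkn : k ≤ n) :
    (∑ i ∈ range (k + 1), (n.choose i : ℝ)) * (p ^ k * (1 - p) ^ (n - k)) ≤ 1 :=
  calc (∑ i ∈ range (k + 1), (n.choose i : ℝ)) * (p ^ k * (1 - p) ^ (n - k))
      ≤ ∑ i ∈ range (k + 1), p ^ i * (1 - p) ^ (n - i) * n.choose i := by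
        rw [sum_mul]
        refine sum_le_sum fun i hi => ?_
        rw [mul_comm]
        exact mul_le_mul_of_nonneg_right
          (pow_mul_one_sub_pow_le hp0 hp (Nat.lt_succ_iff.mp (mem_range.mp hi)) hkn)
          (Nat.cast_nonneg _)
    _ ≤ ∑ i ∈ range (n + 1), p ^ i * (1 - p) ^ (n - i) * n.choose i := by
        refine sum_le_sum_of_subset_of_nonneg (range_subset_range.mpr (by omega)) ?_
        intro i _ _
        have : 0 ≤ 1 - p := by linarith
        positivity
    _ = 1 := by rw [← add_pow, add_sub_cancel, one_pow]

lemma H2_zero : H2 0 = 0 := by simp [H2]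

lemma H2_one_half : H2 (1 / 2) = 1 := by
  have : Real.logb 2 (1 / 2) = -1 := by
    rw [one_div, Real.logb_inv, Real.logb_self_eq_one one_lt_two]
  norm_num [H2, this]

lemma two_rpow_mul_H2_div {k n : ℕ} (hk : 0 < k) (hkn : k < n) :
    (2 : ℝ) ^ (n * H2 (k / n)) = ((k / n : ℝ) ^ k * (1 - k / n) ^ (n - k))⁻¹ := by
  set p : ℝ := k / n
  have hn : (0 : ℝ) < n := by exact_mod_cast hk.trans hkn
  have hp : 0 < p := by positivity
  have hp1 : 0 < 1 - p := by
    rw [sub_pos, div_lt_one hn]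
    exact_mod_cast hkn
  have hnp : (n : ℝ) * p = k := mul_div_cancel₀ _ hn.ne'
  have hexp : (n : ℝ) * H2 p = -(k * Real.logb 2 p) + -((n - k : ℕ) * Real.logb 2 (1 - p)) := by
    rw [Nat.cast_sub hkn.le, ← hnp, H2]
    ring
  rw [hexp, Real.rpow_add two_pos, mul_comm (k : ℝ), mul_comm ((n - k : ℕ) : ℝ),
    Real.rpow_neg zero_le_two, Real.rpow_neg zero_le_two, Real.rpow_mul zero_le_two,
    Real.rpow_mul zero_le_two, Real.rpow_logb two_pos (by norm_num) hp,
    Real.rpow_logb two_pos (by norm_num) hp1, Real.rpow_natCast, Real.rpow_natCast, mul_inv]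

lemma sum_choose_le_two_rpow_mul_H2 {k n : ℕ} (hkn : 2 * k ≤ n) :
    ∑ i ∈ range (k + 1), (n.choose i : ℝ) ≤ (2 : ℝ) ^ (n * H2 (k / n)) := by
  rcases Nat.eq_zero_or_pos k with rfl | hk
  · simp [H2_zero]
  have hn : (0 : ℝ) < n := by exact_mod_cast (by omega : 0 < n)
  have hp : (k / n : ℝ) ≤ 1 / 2 := by
    rw [div_le_iff₀ hn]
    have : (2 * k : ℝ) ≤ n := by exact_mod_cast hkn
    linarith
  have hp1 : 0 < 1 - (k / n : ℝ) := by linarith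
  rw [two_rpow_mul_H2_div hk (by omega), ← one_div, le_div_iff₀ (by positivity)]
  exact sum_choose_mul_pow_le_one (by positivity) hp (by omega)

lemma card_wt_le_le_two_rpow {n : ℕ} (hn : 0 < n) (k : ℕ) :
    ((univ.filter fun y : Fin n → ZMod 2 => wt y ≤ k).card : ℝ) ≤
      (2 : ℝ) ^ (n * H2 (min (k / n) (1 / 2))) := by
  have hn' : (0 : ℝ) < n := by exact_mod_cast hn
  rcases le_or_gt n (2 * k) with hk | hk
  · have hmin : min (k / n : ℝ) (1 / 2) = 1 / 2 := by
      rw [min_eq_right_iff, le_div_iff₀ hn']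
      have : (n : ℝ) ≤ 2 * k := by exact_mod_cast hk
      linarith
    rw [hmin, H2_one_half, mul_one, Real.rpow_natCast]
    calc ((univ.filter fun y : Fin n → ZMod 2 => wt y ≤ k).card : ℝ)
        ≤ Fintype.card (Fin n → ZMod 2) := by exact_mod_cast card_filter_le _ _
      _ = 2 ^ n := by simp
  · have hmin : min (k / n : ℝ) (1 / 2) = k / n := by
      rw [min_eq_left_iff, div_le_iff₀ hn']
      have : (2 * k : ℝ) < n := by exact_mod_cast hk
      linarith
    rw [hmin]
    calc ((univ.filter fun y : Fin n → ZMod 2 => wt y ≤ k).card : ℝ)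
        ≤ ∑ i ∈ range (k + 1), (n.choose i : ℝ) := by exact_mod_cast card_wt_le_le_sum_choose n k
      _ ≤ (2 : ℝ) ^ (n * H2 (k / n)) := sum_choose_le_two_rpow_mul_H2 hk.le

lemma two_rpow_mul_H2_mul_eq {n t : ℕ} (hn : 0 < n) (h ε : ℝ) :
    (2 : ℝ) ^ (n * h) * (2 ^ t / 2 ^ n * ε) = ε * (2 : ℝ) ^ (-(n * (1 - h - t / n))) := by
  have : -((n : ℝ) * (1 - h - t / n)) = n * h + (t - n) := by
    field_simp
    ring
  rw [this, Real.rpow_add two_pos, Real.rpow_sub two_pos, Real.rpow_natCast, Real.rpow_natCast]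
  ring

theorem stmt11_general {n t k : ℕ} (hn : 0 < n) {I : Type*} [Fintype I]
    (C : I → Submodule (ZMod 2) (Fin n → ZMod 2)) (ε : ℝ) (hε : 1 ≤ ε)
    (huniv : ∀ y : Fin n → ZMod 2, y ≠ 0 →
      pr (fun r => y ∈ C r) ≤ (2 : ℝ) ^ t / 2 ^ n * ε)
    (x : Fin n → ZMod 2) :
    pr (fun r => ∃ y ∈ C r, y ≠ 0 ∧ y ≠ x ∧ wt y ≤ k) ≤
      ε * (2 : ℝ) ^
        (-((n : ℝ) * max (1 - H2 (min ((k : ℝ) / n) (1 / 2)) - (t : ℝ) / n) 0)) := by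
  set h := H2 (min ((k : ℝ) / n) (1 / 2))
  set B := univ.filter fun y : Fin n → ZMod 2 => y ≠ 0 ∧ wt y ≤ k
  have hunion : pr (fun r => ∃ y ∈ C r, y ≠ 0 ∧ y ≠ x ∧ wt y ≤ k) ≤
      (2 : ℝ) ^ (n * h) * (2 ^ t / 2 ^ n * ε) :=
    calc pr (fun r => ∃ y ∈ C r, y ≠ 0 ∧ y ≠ x ∧ wt y ≤ k)
        ≤ pr (fun r => ∃ y ∈ B, y ∈ (C r : Set (Fin n → ZMod 2))) :=
          pr_mono fun r ⟨y, hyC, hy0, _, hyk⟩ => ⟨y, by simp [B, hy0, hyk], hyC⟩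
      _ ≤ B.card * (2 ^ t / 2 ^ n * ε) :=
          pr_exists_mem_le_card_mul B _ fun y hy => huniv y (mem_filter.mp hy).2.1
      _ ≤ (2 : ℝ) ^ (n * h) * (2 ^ t / 2 ^ n * ε) := by
          gcongr
          calc (B.card : ℝ) ≤ (univ.filter fun y : Fin n → ZMod 2 => wt y ≤ k).card := by
                refine Nat.cast_le.mpr (card_le_card fun y hy => ?_)
                simp only [B, mem_filter] at hy ⊢
                exact ⟨hy.1, hy.2.2⟩
            _ ≤ _ := card_wt_le_le_two_rpow hn k
  rcases le_total (1 - h - t / n) 0 with hc | hc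
  · rw [max_eq_right hc, mul_zero, neg_zero, Real.rpow_zero, mul_one]
    exact (pr_le_one _).trans hε
  · rw [max_eq_left hc, ← two_rpow_mul_H2_mul_eq hn]
    exact hunion

/-- minimum-distance decoding failure bound for an `ε`-almost universal₂
family with maximum dimension `t = nR`, against a fixed error `x` of weight `k`:
`E_r[P_hd(x;C_r)] ≤ ε · 2^(-n[1 - h(min{k/n,1/2}) - R]_+)`. -/
theorem stmt11 {n t k : ℕ} (hn : 0 < n) {I : Type*} [Fintype I] [Nonempty I]
    (C : I → Submodule (ZMod 2) (Fin n → ZMod 2)) (ε : ℝ) (hε : 1 ≤ ε)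
    (hdim : ∀ r, Module.finrank (ZMod 2) (C r) ≤ t)
    (huniv : ∀ y : Fin n → ZMod 2, y ≠ 0 →
      pr (fun r => y ∈ C r) ≤ (2 : ℝ) ^ t / 2 ^ n * ε)
    (x : Fin n → ZMod 2) (hx : wt x = k) :
    pr (fun r => ∃ y ∈ C r, y ≠ 0 ∧ y ≠ x ∧ wt y ≤ k) ≤
      ε * (2 : ℝ) ^
        (-((n : ℝ) * max (1 - H2 (min ((k : ℝ) / n) (1 / 2)) - (t : ℝ) / n) 0)) :=
  stmt11_general hn C ε hε huniv x
end

section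
/- Let E_0(s,p) = s - log₂[p^{1/(1+s)} + (1-p)^{1/(1+s)}]^{1+s} and E(R,p) = max_{0 ≤ s ≤ 1} (-sR + E_0(s,p)). If 0 < p < 1/2 and R < 1 - h(p), where h is the binary entropy, then E(R,p) > 0. -/
/-- Gallager's function `E₀(s,p)` for the binary symmetric channel. -/
noncomputable def E0 (s p : ℝ) : ℝ :=
  s - Real.logb 2 ((p ^ (1 / (1 + s)) + (1 - p) ^ (1 / (1 + s))) ^ (1 + s))

open Real Set Filter Topology

theorem HasDerivAt.exists_mem_Ioc_pos_of_eq_zero {f : ℝ → ℝ} {a b d : ℝ} (hf : HasDerivAt f d a)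
    (hd : 0 < d) (hfa : f a = 0) (hab : a < b) : ∃ x ∈ Ioc a b, 0 < f x := by
  have hslope : ∀ᶠ x in 𝓝[>] a, 0 < slope f a x :=
    nhdsGT_le_nhdsNE a <| (hasDerivAt_iff_tendsto_slope.mp hf).eventually (eventually_gt_nhds hd)
  obtain ⟨x, hx, hxab⟩ := (hslope.and (Ioc_mem_nhdsGT hab)).exists
  exact ⟨x, hxab, pos_of_slope_pos hxab.1 hx hfa⟩

theorem hasDerivAt_rpow_one_div_one_add_zero {x : ℝ} (hx : 0 < x) :
    HasDerivAt (fun s : ℝ => x ^ (1 / (1 + s))) (-(x * log x)) 0 := by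
  have h : HasDerivAt (fun s : ℝ => 1 / (1 + s)) (-1) 0 := by
    simp only [one_div]
    exact (((hasDerivAt_id (0 : ℝ)).const_add 1).inv (by norm_num)).congr_deriv (by norm_num)
  simpa [mul_comm] using h.const_rpow hx

theorem rpow_add_one_sub_rpow_pos {p : ℝ} (hp0 : 0 < p) (hp1 : p < 1) (t : ℝ) :
    0 < p ^ t + (1 - p) ^ t := by
  have := sub_pos.mpr hp1
  positivity

theorem E0_zero (p : ℝ) : E0 0 p = 0 := by
  simp [E0]

theorem hasDerivAt_E0_zero {p : ℝ} (hp0 : 0 < p) (hp1 : p < 1) :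
    HasDerivAt (fun s => E0 s p) (1 - H2 p) 0 := by
  have hsum := (hasDerivAt_rpow_one_div_one_add_zero hp0).add
    (hasDerivAt_rpow_one_div_one_add_zero (sub_pos.mpr hp1))
  have hpow := hsum.rpow ((hasDerivAt_id (0 : ℝ)).const_add 1) (rpow_add_one_sub_rpow_pos hp0 hp1 _)
  have hlog := (hpow.log (by simp)).div_const (log 2)
  refine HasDerivAt.congr_deriv (f := fun s => E0 s p) ((hasDerivAt_id 0).sub hlog) ?_
  simp [H2, logb]
  ring

theorem continuousOn_E0 {p : ℝ} (hp0 : 0 < p) (hp1 : p < 1) :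
    ContinuousOn (fun s => E0 s p) (Ici 0) := by
  intro s hs
  have hs : 0 < 1 + s := by rw [mem_Ici] at hs; linarith
  have hexp : ContinuousAt (fun s : ℝ => 1 / (1 + s)) s :=
    continuousAt_const.div (continuousAt_const.add continuousAt_id) hs.ne'
  have hsum : ContinuousAt (fun s : ℝ => p ^ (1 / (1 + s)) + (1 - p) ^ (1 / (1 + s))) s :=
    (continuousAt_const.rpow hexp (Or.inl hp0.ne')).add
      (continuousAt_const.rpow hexp (Or.inl (sub_pos.mpr hp1).ne'))
  have hpow := hsum.rpow (continuousAt_const.add continuousAt_id) (Or.inr hs)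
  have hpow_ne : (p ^ (1 / (1 + s)) + (1 - p) ^ (1 / (1 + s))) ^ (1 + s) ≠ 0 :=
    (rpow_pos_of_pos (rpow_add_one_sub_rpow_pos hp0 hp1 _) _).ne'
  exact (continuousAt_id.sub (hpow.logb hpow_ne)).continuousWithinAt

/-- Gallager's reliability function `E(R,p) = max_{0≤s≤1}(-sR + E₀(s,p))` is
strictly positive when `0 < p < 1/2` and `R < 1 - h(p)`. -/
theorem stmt13 (p R : ℝ) (hp0 : 0 < p) (hp1 : p < 1 / 2) (hR : R < 1 - H2 p) :
    0 < sSup ((fun s => -s * R + E0 s p) '' Set.Icc (0 : ℝ) 1) := by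
  have hp1' : p < 1 := by linarith
  have hderiv : HasDerivAt (fun s => -s * R + E0 s p) (1 - H2 p - R) 0 :=
    (((hasDerivAt_neg' 0).mul_const R).add (hasDerivAt_E0_zero hp0 hp1')).congr_deriv (by ring)
  obtain ⟨s, hs, hpos⟩ :=
    hderiv.exists_mem_Ioc_pos_of_eq_zero (by linarith) (by simp [E0_zero]) zero_lt_one
  have hcont : ContinuousOn (fun s => -s * R + E0 s p) (Icc 0 1) :=
    (continuousOn_neg.mul continuousOn_const).add
      ((continuousOn_E0 hp0 hp1').mono Icc_subset_Ici_self)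
  exact lt_csSup_of_lt (isCompact_Icc.bddAbove_image hcont)
    (mem_image_of_mem _ (Ioc_subset_Icc_self hs)) hpos
end

section
/- For 0 < p < 1/2 and 0 < R < 1, the following identity holds: min_{0 ≤ q ≤ 1/2} ([1 - h(q) - R]_+ + d(q‖p)) = max_{0 ≤ s ≤ 1} (-sR + E_0(s,p)), where d(q‖p) = q log₂(q/p) + (1-q) log₂((1-q)/(1-p)), h is binary entropy, E_0(s,p) = s - log₂[p^{1/(1+s)} + (1-p)^{1/(1+s)}]^{1+s}, and [a]_+ = max{a,0}. -/
/-- Binary Kullback–Leibler divergence (base-2 logarithm). -/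
noncomputable def D2 (q p : ℝ) : ℝ :=
  q * Real.logb 2 (q / p) + (1 - q) * Real.logb 2 ((1 - q) / (1 - p))

open Real Set InformationTheory

/-- The exponential family `p_θ`; `E₀(s,p)` is built from its normaliser at `θ = 1/(1+s)`. -/
noncomputable def tilt (p θ : ℝ) : ℝ := p ^ θ / (p ^ θ + (1 - p) ^ θ)

section Tilt

variable {p : ℝ}

lemma tilt_pos (hp0 : 0 < p) (hp1 : p < 1) (θ : ℝ) : 0 < tilt p θ := by
  unfold tilt; have := rpow_pos_of_pos (sub_pos.2 hp1) θ; positivity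

lemma one_sub_tilt (hp0 : 0 < p) (hp1 : p < 1) (θ : ℝ) : 1 - tilt p θ = tilt (1 - p) θ := by
  have := rpow_pos_of_pos (sub_pos.2 hp1) θ
  have := rpow_pos_of_pos hp0 θ
  rw [tilt, tilt, sub_sub_cancel, add_comm ((1 - p) ^ θ)]
  field_simp
  ring

lemma tilt_lt_one (hp0 : 0 < p) (hp1 : p < 1) (θ : ℝ) : tilt p θ < 1 := by
  have := one_sub_tilt hp0 hp1 θ
  have := tilt_pos (sub_pos.2 hp1) (by linarith) θ
  linarith

lemma tilt_le_half (hp0 : 0 < p) (hp : p ≤ 1 / 2) {θ : ℝ} (hθ : 0 ≤ θ) : tilt p θ ≤ 1 / 2 := by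
  have hle : p ^ θ ≤ (1 - p) ^ θ := rpow_le_rpow hp0.le (by linarith) hθ
  have := rpow_pos_of_pos hp0 θ
  rw [tilt, div_le_iff₀ (by linarith)]
  linarith

lemma continuous_tilt (hp0 : 0 < p) (hp1 : p < 1) : Continuous (tilt p) := by
  have hq0 : 0 < 1 - p := sub_pos.2 hp1
  refine Continuous.div (continuous_const.rpow continuous_id fun _ => .inl hp0.ne')
    ((continuous_const.rpow continuous_id fun _ => .inl hp0.ne').add
      (continuous_const.rpow continuous_id fun _ => .inl hq0.ne')) fun θ => ?_
  have := rpow_pos_of_pos hq0 θ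
  have := rpow_pos_of_pos hp0 θ
  positivity

lemma logb_tilt (hp0 : 0 < p) (hp1 : p < 1) (θ : ℝ) :
    logb 2 (tilt p θ) = θ * logb 2 p - logb 2 (p ^ θ + (1 - p) ^ θ) := by
  have := rpow_pos_of_pos (sub_pos.2 hp1) θ
  have := rpow_pos_of_pos hp0 θ
  rw [tilt, logb_div (by positivity) (by positivity), logb_rpow_eq_mul_logb_of_pos hp0]

end Tilt

lemma continuous_H2 : Continuous H2 := by
  have hH2 : H2 = fun q => binEntropy q / log 2 := by
    ext q
    simp only [H2, binEntropy, logb, log_inv]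
    ring
  rw [hH2]
  fun_prop

lemma D2_self (q : ℝ) : D2 q q = 0 := by
  unfold D2
  by_cases h : q = 0 <;> by_cases h' : 1 - q = 0 <;> simp [h, h']

lemma mul_logb_div (b q : ℝ) {x : ℝ} (hx : x ≠ 0) :
    q * logb b (q / x) = q * logb b q - q * logb b x := by
  rcases eq_or_ne q 0 with rfl | hq
  · simp
  · rw [logb_div hq hx]; ring

lemma D2_eq_neg_H2_sub (q : ℝ) {p : ℝ} (hp0 : p ≠ 0) (hp1 : 1 - p ≠ 0) :
    D2 q p = -H2 q - (q * logb 2 p + (1 - q) * logb 2 (1 - p)) := by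
  rw [D2, H2, mul_logb_div _ _ hp0, mul_logb_div _ _ hp1]
  ring

lemma D2_eq_klFun {q p : ℝ} (hp0 : 0 < p) (hp1 : p < 1) :
    D2 q p = (p * klFun (q / p) + (1 - p) * klFun ((1 - q) / (1 - p))) / log 2 := by
  have hp1' : 0 < 1 - p := sub_pos.2 hp1
  rw [D2, logb, logb, klFun_apply, klFun_apply]
  field_simp
  ring

lemma D2_nonneg {q p : ℝ} (hq0 : 0 ≤ q) (hq1 : q ≤ 1) (hp0 : 0 < p) (hp1 : p < 1) :
    0 ≤ D2 q p := by
  rw [D2_eq_klFun hp0 hp1]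
  have := klFun_nonneg (div_nonneg hq0 hp0.le)
  have := klFun_nonneg (div_nonneg (sub_nonneg.2 hq1) (sub_pos.2 hp1).le)
  have := log_pos one_lt_two
  have := sub_pos.2 hp1
  positivity

lemma E0_eq (s : ℝ) {p : ℝ} (hp0 : 0 < p) (hp1 : p < 1) :
    E0 s p = s - (1 + s) * logb 2 (p ^ (1 / (1 + s)) + (1 - p) ^ (1 / (1 + s))) := by
  have := rpow_pos_of_pos hp0 (1 / (1 + s))
  have := rpow_pos_of_pos (sub_pos.2 hp1) (1 / (1 + s))
  rw [E0, logb_rpow_eq_mul_logb_of_pos (by positivity)]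

lemma D2_add_mul_one_sub_H2 {p s : ℝ} (hp0 : 0 < p) (hp1 : p < 1) (hs : 1 + s ≠ 0) (q : ℝ) :
    D2 q p + s * (1 - H2 q) = E0 s p + (1 + s) * D2 q (tilt p (1 / (1 + s))) := by
  have hp1' : 0 < 1 - p := sub_pos.2 hp1
  have hθ : (1 + s) * (1 / (1 + s)) = 1 := mul_one_div_cancel hs
  rw [D2_eq_neg_H2_sub q hp0.ne' hp1'.ne',
    D2_eq_neg_H2_sub q (tilt_pos hp0 hp1 _).ne' (sub_pos.2 (tilt_lt_one hp0 hp1 _)).ne',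
    one_sub_tilt hp0 hp1, logb_tilt hp0 hp1, logb_tilt hp1' (by linarith), sub_sub_cancel,
    add_comm ((1 - p) ^ _), E0_eq s hp0 hp1]
  linear_combination (q * logb 2 p + (1 - q) * logb 2 (1 - p)) * hθ

lemma mul_le_max_zero {s : ℝ} (hs : s ∈ Icc (0 : ℝ) 1) (a : ℝ) : s * a ≤ max a 0 := by
  rcases le_total a 0 with ha | ha
  · exact (mul_nonpos_of_nonneg_of_nonpos hs.1 ha).trans (le_max_right _ _)
  · exact (mul_le_of_le_one_left ha hs.2).trans (le_max_left _ _)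

lemma neg_mul_add_E0_le {p R s q : ℝ} (hp0 : 0 < p) (hp1 : p < 1) (hs : s ∈ Icc (0 : ℝ) 1)
    (hq : q ∈ Icc (0 : ℝ) 1) : -s * R + E0 s p ≤ max (1 - H2 q - R) 0 + D2 q p := by
  have hduality := D2_add_mul_one_sub_H2 (s := s) hp0 hp1 (by linarith [hs.1]) q
  have hD := D2_nonneg hq.1 hq.2 (tilt_pos hp0 hp1 (1 / (1 + s))) (tilt_lt_one hp0 hp1 _)
  nlinarith [mul_le_max_zero hs (1 - H2 q - R), hs.1]

lemma exists_mul_eq_max_zero {a : ℝ → ℝ} (ha : ContinuousOn a (Icc 0 1)) :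
    ∃ s ∈ Icc (0 : ℝ) 1, s * a s = max (a s) 0 := by
  by_cases h0 : a 0 ≤ 0
  · exact ⟨0, left_mem_Icc.2 zero_le_one, by simp [h0]⟩
  by_cases h1 : 0 ≤ a 1
  · exact ⟨1, right_mem_Icc.2 zero_le_one, by simp [h1]⟩
  obtain ⟨s, hs, has⟩ := intermediate_value_Icc' zero_le_one ha
    (show (0 : ℝ) ∈ Icc (a 1) (a 0) from ⟨by linarith, by linarith⟩)
  exact ⟨s, hs, by simp [has]⟩

lemma csInf_image_eq_csSup_image_of_le_of_eq {α ι κ : Type*} [ConditionallyCompleteLattice α]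
    {f : ι → α} {g : κ → α} {S : Set ι} {T : Set κ} (hle : ∀ x ∈ S, ∀ y ∈ T, g y ≤ f x)
    {x₀ : ι} {y₀ : κ} (hx₀ : x₀ ∈ S) (hy₀ : y₀ ∈ T) (heq : f x₀ = g y₀) :
    sInf (f '' S) = sSup (g '' T) := by
  have hleast : IsLeast (f '' S) (f x₀) :=
    ⟨mem_image_of_mem f hx₀, forall_mem_image.2 fun x hx => heq ▸ hle x hx y₀ hy₀⟩
  have hgreatest : IsGreatest (g '' T) (g y₀) :=
    ⟨mem_image_of_mem g hy₀, forall_mem_image.2 fun y hy => heq ▸ hle x₀ hx₀ y hy⟩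
  rw [hleast.csInf_eq, hgreatest.csSup_eq, heq]

theorem stmt14_general (p R : ℝ) (hp0 : 0 < p) (hp1 : p < 1 / 2) :
    sInf ((fun q => max (1 - H2 q - R) 0 + D2 q p) '' Set.Icc (0 : ℝ) (1 / 2)) =
      sSup ((fun s => -s * R + E0 s p) '' Set.Icc (0 : ℝ) 1) := by
  have hp1' : p < 1 := by linarith
  set q : ℝ → ℝ := fun s => tilt p (1 / (1 + s))
  have hq : ContinuousOn q (Icc 0 1) :=
    (continuous_tilt hp0 hp1').comp_continuousOn
      (continuousOn_const.div (continuousOn_const.add continuousOn_id) fun s hs => by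
        linarith [hs.1])
  obtain ⟨s, hs, hslack⟩ :=
    exists_mul_eq_max_zero (a := fun s => 1 - H2 (q s) - R)
      ((continuousOn_const.sub (continuous_H2.comp_continuousOn hq)).sub continuousOn_const)
  have hqs : q s ∈ Icc (0 : ℝ) (1 / 2) :=
    ⟨(tilt_pos hp0 hp1' _).le, tilt_le_half hp0 hp1.le (by have := hs.1; positivity)⟩
  refine csInf_image_eq_csSup_image_of_le_of_eq
    (fun q hq s hs => neg_mul_add_E0_le hp0 hp1' hs ⟨hq.1, by linarith [hq.2]⟩) hqs hs ?_
  have hduality := D2_add_mul_one_sub_H2 (s := s) hp0 hp1' (by linarith [hs.1]) (q s)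
  rw [D2_self, mul_zero, add_zero] at hduality
  simp only [← hslack]
  linarith

/-- for `0 < p < 1/2` and `0 < R < 1`,
`min_{0≤q≤1/2}([1 - h(q) - R]_+ + d(q‖p)) = max_{0≤s≤1}(-sR + E₀(s,p))`. -/
theorem stmt14 (p R : ℝ) (hp0 : 0 < p) (hp1 : p < 1 / 2) (hR0 : 0 < R) (hR1 : R < 1) :
    sInf ((fun q => max (1 - H2 q - R) 0 + D2 q p) '' Set.Icc (0 : ℝ) (1 / 2)) =
      sSup ((fun s => -s * R + E0 s p) '' Set.Icc (0 : ℝ) 1) :=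
  stmt14_general p R hp0 hp1
end

section
/- Let 0 < p, θ < 1 and 0 < q < 1 satisfy d(q‖p) = d(p_θ‖p), where p_θ = p^θ/(p^θ + (1-p)^θ). Then h(p_θ) - h(q) = d(q‖p_θ)/(1-θ). In particular h(p_θ) ≥ h(q), with equality iff q = p_θ. -/
/-- Binary entropy in nats. -/
noncomputable def hNat (q : ℝ) : ℝ := -(q * Real.log q) - (1 - q) * Real.log (1 - q)

/-- Binary relative entropy in nats. -/
noncomputable def dNat (q p : ℝ) : ℝ :=
  q * Real.log (q / p) + (1 - q) * Real.log ((1 - q) / (1 - p))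

/-- The exponential family `p_θ = p^θ/(p^θ + (1-p)^θ)`. -/
noncomputable def pTheta (p θ : ℝ) : ℝ := p ^ θ / (p ^ θ + (1 - p) ^ θ)

/-!
Writing `L(q, s) = -q log s - (1 - q) log (1 - s)` for the cross entropy, `d(q‖s) = L(q, s) - h(q)`.
Since `log p_θ = θ log p - log Z` and `log (1 - p_θ) = θ log (1 - p) - log Z` with
`Z = p^θ + (1-p)^θ`, one has `L(q, p_θ) = θ L(q, p) + log Z` for every `q`. Comparing this at `q`
and at `p_θ` (where `d(p_θ‖p_θ) = 0`) gives the identity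
`d(q‖p_θ) = (1 - θ)(h(p_θ) - h(q)) + θ (d(q‖p) - d(p_θ‖p))`,
whose last term vanishes under the hypothesis. Gibbs' inequality for `d(q‖p_θ)` does the rest.
-/

open Real InformationTheory

lemma mul_log_div_eq (x : ℝ) {y : ℝ} (hy : y ≠ 0) : x * log (x / y) = x * log x - x * log y := by
  rcases eq_or_ne x 0 with rfl | hx
  · simp
  · rw [log_div hx hy, mul_sub]

section Divergence

variable {q s : ℝ}

lemma dNat_eq_neg_hNat_sub (hs0 : s ≠ 0) (hs1 : s ≠ 1) :
    dNat q s = -hNat q - q * log s - (1 - q) * log (1 - s) := by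
  rw [dNat, hNat, mul_log_div_eq q hs0, mul_log_div_eq (1 - q) (sub_ne_zero.mpr hs1.symm)]
  ring

lemma dNat_eq_mul_klFun_add_mul_klFun (hs0 : s ≠ 0) (hs1 : s ≠ 1) :
    dNat q s = s * klFun (q / s) + (1 - s) * klFun ((1 - q) / (1 - s)) := by
  have hs1' : 1 - s ≠ 0 := sub_ne_zero.mpr hs1.symm
  rw [dNat, klFun_apply, klFun_apply]
  field_simp
  ring

variable (hq0 : 0 ≤ q) (hq1 : q ≤ 1) (hs0 : 0 < s) (hs1 : s < 1)
include hq0 hq1 hs0 hs1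

lemma dNat_nonneg : 0 ≤ dNat q s := by
  rw [dNat_eq_mul_klFun_add_mul_klFun hs0.ne' hs1.ne]
  have := klFun_nonneg (div_nonneg hq0 hs0.le)
  have := klFun_nonneg (div_nonneg (sub_nonneg.mpr hq1) (sub_pos.mpr hs1).le)
  have := sub_pos.mpr hs1
  positivity

lemma dNat_eq_zero_iff : dNat q s = 0 ↔ q = s := by
  rw [dNat_eq_mul_klFun_add_mul_klFun hs0.ne' hs1.ne]
  refine ⟨fun h => ?_, ?_⟩
  · have h₁ := klFun_nonneg (div_nonneg hq0 hs0.le)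
    have h₂ := klFun_nonneg (div_nonneg (sub_nonneg.mpr hq1) (sub_pos.mpr hs1).le)
    have h₃ := sub_pos.mpr hs1
    have hzero : klFun (q / s) = 0 := by nlinarith
    rw [klFun_eq_zero_iff (div_nonneg hq0 hs0.le), div_eq_one_iff_eq hs0.ne'] at hzero
    exact hzero
  · rintro rfl
    simp [div_self hs0.ne', div_self (sub_pos.mpr hs1).ne', klFun_one]

end Divergence

section ExponentialFamily

variable {p : ℝ} (θ : ℝ) (hp0 : 0 < p) (hp1 : p < 1)
include hp0 hp1

lemma pTheta_pos : 0 < pTheta p θ := by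
  have := rpow_pos_of_pos (sub_pos.mpr hp1) θ
  unfold pTheta
  positivity

lemma one_sub_pTheta : 1 - pTheta p θ = pTheta (1 - p) θ := by
  have := rpow_pos_of_pos hp0 θ
  have := rpow_pos_of_pos (sub_pos.mpr hp1) θ
  rw [pTheta, pTheta, sub_sub_cancel]
  field_simp
  ring

lemma pTheta_lt_one : pTheta p θ < 1 := by
  have := pTheta_pos θ (sub_pos.mpr hp1) (sub_lt_self 1 hp0)
  rw [← one_sub_pTheta θ hp0 hp1] at this
  linarith

lemma log_pTheta : log (pTheta p θ) = θ * log p - log (p ^ θ + (1 - p) ^ θ) := by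
  have := rpow_pos_of_pos hp0 θ
  have := rpow_pos_of_pos (sub_pos.mpr hp1) θ
  rw [pTheta, log_div (by positivity) (by positivity), log_rpow hp0]

lemma log_one_sub_pTheta :
    log (1 - pTheta p θ) = θ * log (1 - p) - log (p ^ θ + (1 - p) ^ θ) := by
  rw [one_sub_pTheta θ hp0 hp1, log_pTheta θ (sub_pos.mpr hp1) (sub_lt_self 1 hp0), sub_sub_cancel,
    add_comm]

lemma dNat_pTheta (q : ℝ) :
    dNat q (pTheta p θ) =
      (1 - θ) * (hNat (pTheta p θ) - hNat q) + θ * (dNat q p - dNat (pTheta p θ) p) := by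
  have hr0 := (pTheta_pos θ hp0 hp1).ne'
  have hr1 := (pTheta_lt_one θ hp0 hp1).ne
  rw [dNat_eq_neg_hNat_sub hr0 hr1, dNat_eq_neg_hNat_sub hp0.ne' hp1.ne,
    dNat_eq_neg_hNat_sub hp0.ne' hp1.ne]
  simp only [hNat, log_pTheta θ hp0 hp1, log_one_sub_pTheta θ hp0 hp1]
  ring

end ExponentialFamily

theorem stmt16_general (p θ q : ℝ) (hp0 : 0 < p) (hp1 : p < 1) (hθ1 : θ < 1)
    (hq0 : 0 < q) (hq1 : q < 1) (hd : dNat q p = dNat (pTheta p θ) p) :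
    hNat (pTheta p θ) - hNat q = dNat q (pTheta p θ) / (1 - θ) ∧
    hNat q ≤ hNat (pTheta p θ) ∧
    (hNat (pTheta p θ) = hNat q ↔ q = pTheta p θ) := by
  have hθ : 0 < 1 - θ := sub_pos.mpr hθ1
  have hkey : dNat q (pTheta p θ) = (1 - θ) * (hNat (pTheta p θ) - hNat q) := by
    rw [dNat_pTheta θ hp0 hp1, hd, sub_self, mul_zero, add_zero]
  have hr0 := pTheta_pos θ hp0 hp1
  have hr1 := pTheta_lt_one θ hp0 hp1
  have hnonneg := dNat_nonneg hq0.le hq1.le hr0 hr1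
  refine ⟨by rw [hkey, mul_div_cancel_left₀ _ hθ.ne'], ?_, ?_⟩
  · rw [hkey, mul_nonneg_iff_of_pos_left hθ] at hnonneg
    exact sub_nonneg.mp hnonneg
  · rw [← dNat_eq_zero_iff hq0.le hq1.le hr0 hr1, hkey, mul_eq_zero, or_iff_right hθ.ne',
      sub_eq_zero]

/-- if `d(q‖p) = d(p_θ‖p)` with `0 < p, θ, q < 1`, then
`h(p_θ) - h(q) = d(q‖p_θ)/(1-θ)`; in particular `h(p_θ) ≥ h(q)`, with equality iff
`q = p_θ`. -/
theorem stmt16 (p θ q : ℝ) (hp0 : 0 < p) (hp1 : p < 1) (hθ0 : 0 < θ) (hθ1 : θ < 1)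
    (hq0 : 0 < q) (hq1 : q < 1) (hd : dNat q p = dNat (pTheta p θ) p) :
    hNat (pTheta p θ) - hNat q = dNat q (pTheta p θ) / (1 - θ) ∧
    hNat q ≤ hNat (pTheta p θ) ∧
    (hNat (pTheta p θ) = hNat q ↔ q = pTheta p θ) :=
  stmt16_general p θ q hp0 hp1 hθ1 hq0 hq1 hd
end
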